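/- Let G be a finite abelian group and let F be a functor from P(G) to types. Assume that for every chain of subgroups H1 ⊊ K ⊊ H2 of G, the structure map F({H1,H2} ≤ {H1,K,H2}) is injective on the union of the image of F({H1} ≤ {H1,H2}) and the image of F({H2} ≤ {H1,H2}). Then the restriction map from the set of sections of F over P(G) to the set of sections of the restriction of F to P''(G) is a bijection. Consequently, the limit of F over P(G) can be computed by restricting to the subposet P''(G) consisting of singletons and covering pairs. -/

import Mathlib

open CategoryTheory

/-- `P(G)`: the poset of nonempty sets of subgroups of `G` that are totally ordered by
inclusion, ordered by set inclusion. -/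
abbrev ChainPoset (G : Type*) [Group G] : Type _ :=
  {S : Set (Subgroup G) // S.Nonempty ∧ IsChain (· ≤ ·) S}

/-- The singleton `{H} ∈ P(G)` associated to a subgroup `H ⊆ G`. -/
def ChainPoset.sing {G : Type*} [Group G] (H : Subgroup G) : ChainPoset G :=
  ⟨{H}, Set.singleton_nonempty H, Set.subsingleton_singleton.isChain⟩

/-- The pair `{H₁, H₂} ∈ P(G)` associated to subgroups `H₁ ≤ H₂` of `G`. -/
def ChainPoset.pair {G : Type*} [Group G] (H1 H2 : Subgroup G) (h : H1 ≤ H2) :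
    ChainPoset G :=
  ⟨{H1, H2}, ⟨H1, Or.inl rfl⟩, by
    intro a ha b hb _
    simp only [Set.mem_insert_iff, Set.mem_singleton_iff] at ha hb
    rcases ha with rfl | rfl <;> rcases hb with rfl | rfl
    exacts [Or.inl le_rfl, Or.inl h, Or.inr h, Or.inl le_rfl]⟩

/-- The triple `{H₁, K, H₂} ∈ P(G)` associated to subgroups `H₁ ≤ K ≤ H₂` of `G`. -/
def ChainPoset.triple {G : Type*} [Group G] (H1 K H2 : Subgroup G) (h1 : H1 ≤ K)
    (h2 : K ≤ H2) : ChainPoset G :=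
  ⟨{H1, K, H2}, ⟨H1, Or.inl rfl⟩, by
    intro a ha b hb _
    simp only [Set.mem_insert_iff, Set.mem_singleton_iff] at ha hb
    rcases ha with rfl | rfl | rfl <;> rcases hb with rfl | rfl | rfl
    exacts [Or.inl le_rfl, Or.inl h1, Or.inl (h1.trans h2), Or.inr h1, Or.inl le_rfl,
      Or.inl h2, Or.inr (h1.trans h2), Or.inr h2, Or.inl le_rfl]⟩

lemma ChainPoset.sing_le_pair_left {G : Type*} [Group G] {H1 H2 : Subgroup G}
    (h : H1 ≤ H2) : ChainPoset.sing H1 ≤ ChainPoset.pair H1 H2 h := by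
  intro a ha
  simp only [ChainPoset.sing, Set.mem_singleton_iff] at ha
  subst ha
  exact Set.mem_insert _ _

lemma ChainPoset.sing_le_pair_right {G : Type*} [Group G] {H1 H2 : Subgroup G}
    (h : H1 ≤ H2) : ChainPoset.sing H2 ≤ ChainPoset.pair H1 H2 h := by
  intro a ha
  simp only [ChainPoset.sing, Set.mem_singleton_iff] at ha
  subst ha
  exact Set.mem_insert_iff.mpr (Or.inr rfl)

lemma ChainPoset.pair_le_triple {G : Type*} [Group G] {H1 K H2 : Subgroup G}
    (h1 : H1 ≤ K) (h2 : K ≤ H2) :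
    ChainPoset.pair H1 H2 (h1.trans h2) ≤ ChainPoset.triple H1 K H2 h1 h2 := by
  intro a ha
  simp only [ChainPoset.pair, Set.mem_insert_iff, Set.mem_singleton_iff] at ha
  rcases ha with rfl | rfl
  · exact Set.mem_insert _ _
  · exact Set.mem_insert_iff.mpr (Or.inr (Set.mem_insert_iff.mpr (Or.inr rfl)))

/-- `P''(G)`: the full subposet of `P(G)` consisting of the singletons `{H}` together
with the covering pairs `{H₁, H₂}`, i.e. those with `H₁ ⊊ H₂` such that no subgroup `K`
satisfies `H₁ ⊊ K ⊊ H₂`. -/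
abbrev ChainPoset.covers (G : Type*) [Group G] : Type _ :=
  {S : ChainPoset G //
    (∃ H : Subgroup G, S.1 = {H}) ∨
      ∃ H1 H2 : Subgroup G, H1 < H2 ∧ S.1 = {H1, H2} ∧
        ¬∃ K : Subgroup G, H1 < K ∧ K < H2}

/-- The inclusion functor `P''(G) ⥤ P(G)`. -/
def ChainPoset.coversIncl (G : Type*) [Group G] : ChainPoset.covers G ⥤ ChainPoset G :=
  Monotone.functor (f := (Subtype.val : ChainPoset.covers G → ChainPoset G))
    (fun _ _ h => h)

/-!
A section over `P(G)` is determined by its values on singletons, since every chain contains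
one. Conversely, a family `(y_H)` on singletons extends to a section as soon as it is
compatible on every pair `H₁ ≤ H₂`, because two members of a chain span a pair inside it.
A section over `P''(G)` gives compatibility on covering pairs, and compatibility propagates
to all pairs by induction along the finite subgroup lattice: for `H₁ < K ⋖ H₂`, compatibility
on `{H₁, K}` and `{K, H₂}` makes the images of `y_{H₁}` and `y_{H₂}` agree in `F({H₁, K, H₂})`,
and the injectivity hypothesis pulls this agreement back to `F({H₁, H₂})`.
-/

theorem le_induction_of_covBy {α : Type*} [PartialOrder α] [WellFoundedLT α]
    [IsStronglyCoatomic α] {P : α → α → Prop} (refl : ∀ a, P a a)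
    (covBy : ∀ {a b}, a ⋖ b → P a b)
    (trans : ∀ {a b c}, a < b → b < c → P a b → P b c → P a c) {a b : α} (hab : a ≤ b) :
    P a b := by
  induction b using WellFoundedLT.induction generalizing a with
  | _ b ih =>
    rcases hab.eq_or_lt with rfl | hlt
    · exact refl a
    obtain ⟨c, hac, hcb⟩ := exists_le_covBy_of_lt hlt
    rcases hac.eq_or_lt with rfl | hac
    · exact covBy hcb
    · exact trans hac hcb.lt (ih c hcb.lt hac.le) (covBy hcb)

theorem CategoryTheory.Functor.sections_ext_of_exists_le {J ι : Type*} [Preorder J] {F : J ⥤ Type*}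
    (f : ι → J) (hf : ∀ j, ∃ i, f i ≤ j) {x x' : F.sections}
    (h : ∀ i, x.1 (f i) = x'.1 (f i)) : x = x' := by
  refine Subtype.ext <| funext fun j => ?_
  obtain ⟨i, hij⟩ := hf j
  rw [← x.2 (homOfLE hij), ← x'.2 (homOfLE hij), h i]

namespace ChainPoset

variable {G : Type*} [Group G]

lemma sing_le {S : ChainPoset G} {H : Subgroup G} (hH : H ∈ S.1) : sing H ≤ S := by
  rintro _ rfl
  exact hH

lemma pair_le {S : ChainPoset G} {H1 H2 : Subgroup G} (h : H1 ≤ H2) (h1 : H1 ∈ S.1)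
    (h2 : H2 ∈ S.1) : pair H1 H2 h ≤ S := by
  rintro _ (rfl | rfl)
  exacts [h1, h2]

lemma mem_sing (H : Subgroup G) : H ∈ (sing H).1 := rfl

lemma mem_pair_left {H1 H2 : Subgroup G} (h : H1 ≤ H2) : H1 ∈ (pair H1 H2 h).1 :=
  Set.mem_insert _ _

lemma mem_pair_right {H1 H2 : Subgroup G} (h : H1 ≤ H2) : H2 ∈ (pair H1 H2 h).1 :=
  Set.mem_insert_of_mem _ rfl

lemma mem_triple_middle {H1 K H2 : Subgroup G} (h1 : H1 ≤ K) (h2 : K ≤ H2) :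
    K ∈ (triple H1 K H2 h1 h2).1 :=
  Set.mem_insert_of_mem _ (Set.mem_insert _ _)

lemma exists_sing_le (S : ChainPoset G) : ∃ H, sing H ≤ S :=
  ⟨_, sing_le S.2.1.some_mem⟩

variable (F : ChainPoset G ⥤ Type*) (y : ∀ H : Subgroup G, F.obj (sing H))

def mapSing {S : ChainPoset G} {H : Subgroup G} (hH : H ∈ S.1) : F.obj S :=
  F.map (homOfLE (sing_le hH)) (y H)

variable {F y}

lemma map_mapSing {S T : ChainPoset G} (f : S ⟶ T) {H : Subgroup G} (hH : H ∈ S.1) :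
    F.map f (mapSing F y hH) = mapSing F y (leOfHom f hH) := by
  simp only [mapSing, ← Functor.map_comp_apply]
  rfl

lemma mapSing_sing (H : Subgroup G) :
    mapSing F y (mem_sing H) = y H :=
  F.map_id_apply (sing H) (y H)

variable (F y) in
def PairCompatible (H1 H2 : Subgroup G) : Prop :=
  ∀ h : H1 ≤ H2, mapSing F y (mem_pair_left h) = mapSing F y (mem_pair_right h)

lemma pairCompatible_self (H : Subgroup G) : PairCompatible F y H H :=
  fun _ => rfl

lemma PairCompatible.mapSing_eq {H1 H2 : Subgroup G} (hc : PairCompatible F y H1 H2)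
    (h : H1 ≤ H2) {S : ChainPoset G} (h1 : H1 ∈ S.1) (h2 : H2 ∈ S.1) :
    mapSing F y h1 = mapSing F y h2 := by
  have := congrArg (F.map (homOfLE (pair_le h h1 h2))) (hc h)
  rwa [map_mapSing, map_mapSing] at this

lemma mapSing_eq_of_forall_pairCompatible (hy : ∀ H1 H2, PairCompatible F y H1 H2)
    {S : ChainPoset G} {H H' : Subgroup G} (hH : H ∈ S.1) (hH' : H' ∈ S.1) :
    mapSing F y hH = mapSing F y hH' := by
  rcases eq_or_ne H H' with rfl | hne
  · rfl
  rcases S.2.2 hH hH' hne with hle | hle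
  · exact (hy H H').mapSing_eq hle hH hH'
  · exact ((hy H' H).mapSing_eq hle hH' hH).symm

noncomputable def sectionOfSing (hy : ∀ H1 H2, PairCompatible F y H1 H2) : F.sections :=
  ⟨fun S => mapSing F y S.2.1.some_mem, fun f => by
    rw [map_mapSing]
    exact mapSing_eq_of_forall_pairCompatible hy _ _⟩

lemma sectionOfSing_sing (hy : ∀ H1 H2, PairCompatible F y H1 H2) (H : Subgroup G) :
    (sectionOfSing hy).1 (sing H) = y H :=
  (mapSing_eq_of_forall_pairCompatible hy (sing H).2.1.some_mem _).trans (mapSing_sing H)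

variable (F) in
def PairToTripleInjOn {H1 K H2 : Subgroup G} (h1 : H1 < K) (h2 : K < H2) : Prop :=
  Set.InjOn (F.map (homOfLE (pair_le_triple h1.le h2.le)))
    (Set.range (F.map (homOfLE (sing_le_pair_left (h1.trans h2).le))) ∪
      Set.range (F.map (homOfLE (sing_le_pair_right (h1.trans h2).le))))

lemma PairCompatible.trans {H1 K H2 : Subgroup G} (h1 : H1 < K) (h2 : K < H2)
    (hinj : PairToTripleInjOn F h1 h2)
    (hc1 : PairCompatible F y H1 K) (hc2 : PairCompatible F y K H2) :
    PairCompatible F y H1 H2 := by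
  intro _
  refine hinj (Or.inl ⟨y H1, rfl⟩) (Or.inr ⟨y H2, rfl⟩) ?_
  change F.map _ (mapSing F y (mem_pair_left _)) = F.map _ (mapSing F y (mem_pair_right _))
  rw [map_mapSing, map_mapSing]
  have hK := mem_triple_middle h1.le h2.le
  exact (hc1.mapSing_eq h1.le _ hK).trans (hc2.mapSing_eq h2.le hK _)

lemma forall_pairCompatible_of_covBy [WellFoundedLT (Subgroup G)]
    [WellFoundedGT (Subgroup G)]
    (hinj : ∀ (H1 K H2 : Subgroup G) (h1 : H1 < K) (h2 : K < H2), PairToTripleInjOn F h1 h2)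
    (hcov : ∀ {H1 H2 : Subgroup G}, H1 ⋖ H2 → PairCompatible F y H1 H2) (H1 H2 : Subgroup G) :
    PairCompatible F y H1 H2 := fun h =>
  le_induction_of_covBy (P := PairCompatible F y) pairCompatible_self hcov
    (fun h1 h2 => PairCompatible.trans h1 h2 (hinj _ _ _ h1 h2)) h h

def coversSing (H : Subgroup G) : covers G :=
  ⟨sing H, Or.inl ⟨H, rfl⟩⟩

def coversPair {H1 H2 : Subgroup G} (h : H1 ⋖ H2) : covers G :=
  ⟨pair H1 H2 h.le, Or.inr ⟨H1, H2, h.lt, rfl, fun ⟨_, h1, h2⟩ => h.2 h1 h2⟩⟩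

lemma pairCompatible_of_covBy (s : (coversIncl G ⋙ F).sections) {H1 H2 : Subgroup G}
    (h : H1 ⋖ H2) : PairCompatible F (fun H => s.1 (coversSing H)) H1 H2 := fun _ =>
  (s.2 (homOfLE (sing_le_pair_left h.le) : coversSing H1 ⟶ coversPair h)).trans
    (s.2 (homOfLE (sing_le_pair_right h.le) : coversSing H2 ⟶ coversPair h)).symm

end ChainPoset

/-- **The limit over `P(G)` is computed on `P''(G)`.**  Let `G` be a finite abelian
group and `F : P(G) ⥤ Type` a functor such that for every chain `H₁ ⊊ K ⊊ H₂` the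
structure map `F({H₁,H₂} ≤ {H₁,K,H₂})` is injective on the union of the images of
`F({H₁} ≤ {H₁,H₂})` and `F({H₂} ≤ {H₁,H₂})`.  Then the restriction map from sections
of `F` over `P(G)` to sections of the restriction of `F` to the subposet `P''(G)` of
singletons and covering pairs is a bijection. -/
theorem sections_restrict_to_covers_bijective (G : Type*) [CommGroup G] [Finite G]
    (F : ChainPoset G ⥤ Type*)
    (hinj : ∀ (H1 K H2 : Subgroup G) (h1 : H1 < K) (h2 : K < H2),
      Set.InjOn (F.map (homOfLE (ChainPoset.pair_le_triple h1.le h2.le)))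
        (Set.range (F.map (homOfLE (ChainPoset.sing_le_pair_left (h1.trans h2).le))) ∪
          Set.range (F.map (homOfLE (ChainPoset.sing_le_pair_right (h1.trans h2).le))))) :
    Function.Bijective
      (fun x : F.sections =>
        (⟨fun S => x.1 S.1, fun {S T} f => x.2 ((ChainPoset.coversIncl G).map f)⟩ :
          (ChainPoset.coversIncl G ⋙ F).sections)) := by
  refine ⟨fun x x' h => Functor.sections_ext_of_exists_le ChainPoset.sing ChainPoset.exists_sing_le
    fun H => congrFun (congrArg Subtype.val h) (ChainPoset.coversSing H), fun s => ?_⟩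
  have hy := ChainPoset.forall_pairCompatible_of_covBy hinj (ChainPoset.pairCompatible_of_covBy s)
  exact ⟨ChainPoset.sectionOfSing hy, Functor.sections_ext_of_exists_le ChainPoset.coversSing
    (fun S => ChainPoset.exists_sing_le S.1) (ChainPoset.sectionOfSing_sing hy)⟩
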